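/- arXiv:1105.0793 — 6 statements merged into one kernel-verified Lean document; each statement's English description precedes it below -/
import Mathlib

section
/- Let I ⊆ S, H ⊆ I, and let u, w ∈ X_I. Then for every z : X → ℝ and every N ≠ 0, the aggregated recombination rate satisfies ∑_{G ⊆ S, G∩I = H} ∑_{x ∈ X, π_I(x)=u} ∑_{y ∈ X, π_I(y)=w} (ρ_G / N) · z(x) · z(y) = (ρ^{(I)}_H / N) · (π_I.z)(u) · (π_I.z)(w), where ρ^{(I)}_H := ∑_{G ⊆ S, G∩I = H} ρ_G. Hence the total rate at which the marginal process on the sites I performs the marginal recombination event corresponding to H between marginal types u and w depends only on the current marginal configuration π_I.z. -/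
open scoped Classical

noncomputable section

namespace MoranRecomb

variable {n : ℕ} {Xa : Fin n → Type*}

/-- The canonical projection `π_I` onto the marginal type space `X_I`. -/
def projI (I : Finset (Fin n)) (x : ∀ i, Xa i) : ∀ i : {j // j ∈ I}, Xa i.val :=
  fun i => x i.val

/-- The marginal `π_I.z` of a real-valued measure `z` on `X`, as a measure on `X_I`. -/
def margI [∀ i, Fintype (Xa i)] (I : Finset (Fin n)) (z : (∀ i, Xa i) → ℝ)
    (u : ∀ i : {j // j ∈ I}, Xa i.val) : ℝ :=
  ∑ y : ∀ i, Xa i, if projI I y = u then z y else 0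

/-- Aggregation of the recombination rates under marginalisation: the total rate at which
the marginal process on the sites `I` performs the marginal recombination event
corresponding to `H` between marginal types `u` and `w` is
`(ρ^{(I)}_H / N) · (π_I.z)(u) · (π_I.z)(w)`, with `ρ^{(I)}_H = ∑_{G∩I=H} ρ_G`; it depends
only on the current marginal configuration `π_I.z`. -/
theorem marginal_rates (hn : 1 ≤ n)
    [∀ i, Fintype (Xa i)] [∀ i, Nonempty (Xa i)]
    (ρ : Finset (Fin n) → ℝ) (hρ : ∀ G, 0 ≤ ρ G)
    (I H : Finset (Fin n)) (hH : H ⊆ I)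
    (u w : ∀ i : {j // j ∈ I}, Xa i.val)
    (z : (∀ i, Xa i) → ℝ) (N : ℝ) (hN : N ≠ 0) :
    ∑ G ∈ Finset.univ.filter (fun G : Finset (Fin n) => G ∩ I = H),
      ∑ x : ∀ i, Xa i, ∑ y : ∀ i, Xa i,
        (if projI I x = u ∧ projI I y = w then ρ G / N * z x * z y else 0)
    = (∑ G ∈ Finset.univ.filter (fun G : Finset (Fin n) => G ∩ I = H), ρ G) / N
        * margI I z u * margI I z w := by
  have key : ∀ G : Finset (Fin n),
      ∑ x : ∀ i, Xa i, ∑ y : ∀ i, Xa i,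
        (if projI I x = u ∧ projI I y = w then ρ G / N * z x * z y else 0)
      = ρ G / N * margI I z u * margI I z w := by
    intro G
    unfold margI
    rw [mul_assoc, Finset.sum_mul_sum, Finset.mul_sum]
    refine Finset.sum_congr rfl fun x _ => ?_
    rw [Finset.mul_sum]
    refine Finset.sum_congr rfl fun y _ => ?_
    by_cases hx : projI I x = u <;> by_cases hy : projI I y = w <;>
      simp [hx, hy] <;> ring
  rw [Finset.sum_congr rfl fun G _ => key G, ← Finset.sum_mul, ← Finset.sum_mul,
    ← Finset.sum_div]

end MoranRecomb
end
end

section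
/- Let n = 2 (two sites), let ρ := ρ_{{1}} (= ρ_{{2}}) be the single recombination rate, fix a reference type x° ∈ X, and write c(z) := [1,2]_z = z(x°). Then for every m ≥ 1 and every z : X → ℕ with ∑_y z(y) = N, the recombination generator applied to the m-th power satisfies (𝒢(c^m))(z) = (ρ/N) · [ ((c(z)+1)^m − c(z)^m) · ([1]_z − c(z)) · ([2]_z − c(z)) + ((c(z)−1)^m − c(z)^m) · c(z) · (N − [1]_z − [2]_z + c(z)) ]. Since [1]_z and [2]_z are conserved by recombination, d/dt E[[1,2]_t^m] is a linear combination of the moments E[[1,2]_t^k], k ≤ m, with constant coefficients: in the two-site case the moment hierarchy closes at every order m. -/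
open scoped Classical

noncomputable section

namespace MoranRecomb

variable {Xa : Fin 2 → Type*}

/-- The recombination map `p_G`. -/
def recMap (G : Finset (Fin 2)) (x y : ∀ i, Xa i) : ∀ i, Xa i :=
  fun i => if i ∈ G then x i else y i

/-- The delta (point) counting measure. -/
def delta {α : Type*} (x : α) : α → ℤ := fun w => if w = x then 1 else 0

/-- The jump vector `v_{G,x,y}` of a recombination event. -/
def jump (G : Finset (Fin 2)) (x y : ∀ i, Xa i) : (∀ i, Xa i) → ℤ :=
  fun w => delta (recMap G x y) w + delta (recMap Gᶜ x y) w - delta x w - delta y w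

/-- The recombination generator `𝒢`. -/
def recGen [∀ i, Fintype (Xa i)] (ρ : Finset (Fin 2) → ℝ) (N : ℝ)
    (f : ((∀ i, Xa i) → ℤ) → ℝ) (z : (∀ i, Xa i) → ℤ) : ℝ :=
  ∑ G : Finset (Fin 2), ∑ x : ∀ i, Xa i, ∑ y : ∀ i, Xa i,
    ρ G / (4 * N) * (z x : ℝ) * (z y : ℝ) * (f (z + jump G x y) - f z)

/-- `[A]_z = (π_A.z)(π_A(x°))` of an integer configuration, as a real number. -/
def margRZ [∀ i, Fintype (Xa i)] (A : Finset (Fin 2)) (z : (∀ i, Xa i) → ℤ)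
    (u : ∀ i, Xa i) : ℝ :=
  ∑ y : ∀ i, Xa i, if ∀ i ∈ A, y i = u i then (z y : ℝ) else 0

/-- Pointwise evaluation of the generator summand, for `G = {0}` or `{1}`. -/
lemma pointwise (K : ℝ) (m : ℕ) (z : (∀ i, Xa i) → ℕ) (x0 : ∀ i, Xa i)
    (G : Finset (Fin 2)) (hG : G = {0} ∨ G = {1}) (x y : ∀ i, Xa i) :
    K * ((z x : ℤ) : ℝ) * ((z y : ℤ) : ℝ) *
      ((((z x0 : ℤ) + jump G x y x0 : ℤ) : ℝ) ^ m - (((z x0 : ℤ) : ℝ)) ^ m)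
    = (K * (((z x0 : ℝ) + 1) ^ m - (z x0 : ℝ) ^ m) *
        (if x0 0 = x 0 ∧ ¬ x0 1 = x 1 then (z x : ℝ) else 0)) *
        (if ¬ x0 0 = y 0 ∧ x0 1 = y 1 then (z y : ℝ) else 0)
    + (K * (((z x0 : ℝ) + 1) ^ m - (z x0 : ℝ) ^ m) *
        (if ¬ x0 0 = x 0 ∧ x0 1 = x 1 then (z x : ℝ) else 0)) *
        (if x0 0 = y 0 ∧ ¬ x0 1 = y 1 then (z y : ℝ) else 0)
    + (K * (((z x0 : ℝ) - 1) ^ m - (z x0 : ℝ) ^ m) *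
        (if x0 0 = x 0 ∧ x0 1 = x 1 then (z x : ℝ) else 0)) *
        (if ¬ x0 0 = y 0 ∧ ¬ x0 1 = y 1 then (z y : ℝ) else 0)
    + (K * (((z x0 : ℝ) - 1) ^ m - (z x0 : ℝ) ^ m) *
        (if ¬ x0 0 = x 0 ∧ ¬ x0 1 = x 1 then (z x : ℝ) else 0)) *
        (if x0 0 = y 0 ∧ x0 1 = y 1 then (z y : ℝ) else 0) := by
  by_cases hx1 : x0 0 = x 0 <;> by_cases hx2 : x0 1 = x 1 <;>
    by_cases hy1 : x0 0 = y 0 <;> by_cases hy2 : x0 1 = y 1 <;>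
    rcases hG with rfl | rfl <;>
    simp_all [jump, delta, recMap, funext_iff, Fin.forall_fin_two] <;>
    (push_cast; ring)

/-- Two sites, arbitrary moments: with `c(z) = [1,2]_z = z(x°)`, the recombination
generator applied to the `m`-th power `c^m` is
`(ρ/N) [((c+1)^m − c^m)([1]_z − c)([2]_z − c) + ((c−1)^m − c^m) c (N − [1]_z − [2]_z + c)]`;
since the one-site marginals are conserved by recombination, the moment hierarchy closes
at every order `m`. -/
theorem two_sites_moments
    [∀ i, Fintype (Xa i)] [∀ i, Nonempty (Xa i)]
    (ρ : Finset (Fin 2) → ℝ) (ρ1 : ℝ) (hρ0 : 0 ≤ ρ1)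
    (h1 : ρ {0} = ρ1) (h2 : ρ {1} = ρ1) (hρe : ρ ∅ = 0) (hρu : ρ Finset.univ = 0)
    (N : ℝ) (hN : 0 < N) (x0 : ∀ i, Xa i)
    (m : ℕ) (hm : 1 ≤ m)
    (z : (∀ i, Xa i) → ℕ) (hz : ∑ y : ∀ i, Xa i, (z y : ℝ) = N) :
    recGen ρ N (fun w => (w x0 : ℝ) ^ m) (fun y => (z y : ℤ))
      = ρ1 / N *
          ((((z x0 : ℝ) + 1) ^ m - (z x0 : ℝ) ^ m) *
              (margRZ {0} (fun y => (z y : ℤ)) x0 - (z x0 : ℝ)) *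
              (margRZ {1} (fun y => (z y : ℤ)) x0 - (z x0 : ℝ))
            + (((z x0 : ℝ) - 1) ^ m - (z x0 : ℝ) ^ m) * (z x0 : ℝ) *
              (N - margRZ {0} (fun y => (z y : ℤ)) x0
                 - margRZ {1} (fun y => (z y : ℤ)) x0 + (z x0 : ℝ))) := by
  classical
  have hNe : N ≠ 0 := hN.ne'
  set SA : ℝ := ∑ x : ∀ i, Xa i, if x0 0 = x 0 ∧ ¬ x0 1 = x 1 then (z x : ℝ) else 0 with hSA
  set SB : ℝ := ∑ x : ∀ i, Xa i, if ¬ x0 0 = x 0 ∧ x0 1 = x 1 then (z x : ℝ) else 0 with hSB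
  set SC : ℝ := ∑ x : ∀ i, Xa i, if x0 0 = x 0 ∧ x0 1 = x 1 then (z x : ℝ) else 0 with hSC
  set SD : ℝ := ∑ x : ∀ i, Xa i, if ¬ x0 0 = x 0 ∧ ¬ x0 1 = x 1 then (z x : ℝ) else 0 with hSD
  have hfact : ∀ (u v : (∀ i, Xa i) → ℝ),
      (∑ x : ∀ i, Xa i, ∑ y : ∀ i, Xa i, u x * v y)
        = (∑ x : ∀ i, Xa i, u x) * (∑ y : ∀ i, Xa i, v y) := by
    intro u v
    rw [Finset.sum_mul]
    exact Finset.sum_congr rfl fun x _ => (Finset.mul_sum _ _ _).symm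
  have key : ∀ G : Finset (Fin 2), G = {0} ∨ G = {1} →
      (∑ x : ∀ i, Xa i, ∑ y : ∀ i, Xa i,
        ρ1 / (4 * N) * ((z x : ℤ) : ℝ) * ((z y : ℤ) : ℝ) *
          ((((z x0 : ℤ) + jump G x y x0 : ℤ) : ℝ) ^ m - (((z x0 : ℤ) : ℝ)) ^ m))
      = (ρ1 / (4 * N) * (((z x0 : ℝ) + 1) ^ m - (z x0 : ℝ) ^ m)) * SA * SB
        + (ρ1 / (4 * N) * (((z x0 : ℝ) + 1) ^ m - (z x0 : ℝ) ^ m)) * SB * SA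
        + (ρ1 / (4 * N) * (((z x0 : ℝ) - 1) ^ m - (z x0 : ℝ) ^ m)) * SC * SD
        + (ρ1 / (4 * N) * (((z x0 : ℝ) - 1) ^ m - (z x0 : ℝ) ^ m)) * SD * SC := by
    intro G hG
    rw [Finset.sum_congr rfl fun x _ => Finset.sum_congr rfl fun y _ =>
      pointwise (ρ1 / (4 * N)) m z x0 G hG x y]
    simp only [Finset.sum_add_distrib]
    rw [hfact, hfact, hfact, hfact]
    simp only [← Finset.mul_sum, hSA, hSB, hSC, hSD]
  have hcond0 : ∀ w : ∀ i, Xa i,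
      (∀ i ∈ ({0} : Finset (Fin 2)), w i = x0 i) ↔ x0 0 = w 0 := by
    intro w
    constructor
    · intro h; exact (h 0 (by simp)).symm
    · intro h i hi
      rw [Finset.mem_singleton] at hi
      subst hi; exact h.symm
  have hcond1 : ∀ w : ∀ i, Xa i,
      (∀ i ∈ ({1} : Finset (Fin 2)), w i = x0 i) ↔ x0 1 = w 1 := by
    intro w
    constructor
    · intro h; exact (h 1 (by simp)).symm
    · intro h i hi
      rw [Finset.mem_singleton] at hi
      subst hi; exact h.symm
  have hm1 : margRZ {0} (fun y => (z y : ℤ)) x0 = SA + SC := by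
    rw [margRZ, hSA, hSC, ← Finset.sum_add_distrib]
    refine Finset.sum_congr rfl fun y _ => ?_
    rw [if_congr (hcond0 y) rfl rfl]
    by_cases hy1 : x0 0 = y 0 <;> by_cases hy2 : x0 1 = y 1 <;> simp [hy1, hy2]
  have hm2 : margRZ {1} (fun y => (z y : ℤ)) x0 = SB + SC := by
    rw [margRZ, hSB, hSC, ← Finset.sum_add_distrib]
    refine Finset.sum_congr rfl fun y _ => ?_
    rw [if_congr (hcond1 y) rfl rfl]
    by_cases hy1 : x0 0 = y 0 <;> by_cases hy2 : x0 1 = y 1 <;> simp [hy1, hy2]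
  have htot : SA + SB + SC + SD = N := by
    rw [← hz, hSA, hSB, hSC, hSD, ← Finset.sum_add_distrib, ← Finset.sum_add_distrib,
      ← Finset.sum_add_distrib]
    refine Finset.sum_congr rfl fun y _ => ?_
    by_cases hy1 : x0 0 = y 0 <;> by_cases hy2 : x0 1 = y 1 <;> simp [hy1, hy2]
  have hc : SC = (z x0 : ℝ) := by
    have hiff : ∀ x : ∀ i, Xa i,
        (if x0 0 = x 0 ∧ x0 1 = x 1 then (z x : ℝ) else 0)
          = (if x = x0 then (z x : ℝ) else 0) := by
      intro x
      by_cases h : x = x0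
      · subst h; simp
      · rw [if_neg h, if_neg fun hcc =>
          h (funext_iff.mpr (Fin.forall_fin_two.mpr ⟨hcc.1.symm, hcc.2.symm⟩))]
    rw [hSC, Finset.sum_congr rfl fun x _ => hiff x, Finset.sum_ite_eq' Finset.univ x0]
    simp
  rw [recGen,
    show (Finset.univ : Finset (Finset (Fin 2))) = {∅, {0}, {1}, Finset.univ} from by decide]
  rw [Finset.sum_insert (by decide), Finset.sum_insert (by decide),
    Finset.sum_insert (by decide), Finset.sum_singleton]
  simp only [hρe, hρu, h1, h2, zero_div, zero_mul, mul_zero, Finset.sum_const_zero,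
    zero_add, add_zero, Pi.add_apply]
  rw [key {0} (Or.inl rfl), key {1} (Or.inr rfl), hm1, hm2]
  have hSD' : SD = N - SA - SB - (z x0 : ℝ) := by
    rw [hc] at htot; linarith
  rw [hSD', hc]
  field_simp
  ring

end MoranRecomb
end
end

section
/- Let ω : ℝ → (X → ℝ) be a solution of the deterministic recombination equation, i.e. for every t, ω has derivative at t equal to ∑_{G⊆S} (ρ_G/2)(R_G(ω_t) − ω_t), and suppose the total mass |ω_t| := ∑_{y∈X} ω_t(y) is a constant c₀ ≠ 0. Let {A_1,…,A_m} be a partition of S into nonempty blocks. Then for every t, the curve t ↦ (π_{A_1}.ω_t) ⊗ ⋯ ⊗ (π_{A_m}.ω_t) (a function on X_{A_1} × ⋯ × X_{A_m}) has derivative at t equal to ∑_{j=1}^{m} ∑_{B ⊆ A_j} (ϱ^{(j)}_B/2) · (π_{A_1}.ω_t) ⊗ ⋯ ⊗ [ (1/c₀)(π_B.ω_t) ⊗ (π_{A_j∖B}.ω_t) − (π_{A_j}.ω_t) ] ⊗ ⋯ ⊗ (π_{A_m}.ω_t), where the bracketed factor sits in position j, is viewed as a function on X_{A_j}, and ϱ^{(j)}_B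 := ∑_{H ⊆ S, H ∩ A_j = B} ρ_H. -/
open scoped Classical

noncomputable section

namespace MoranRecomb

variable {n : ℕ} {Xa : Fin n → Type*}

/-- The `A`-marginal of a real-valued measure `ω` on `X`, evaluated at the
`A`-projection of a full type `u`: `(π_A.ω)(π_A(u))`. -/
def margR [∀ i, Fintype (Xa i)] (A : Finset (Fin n)) (ω : (∀ i, Xa i) → ℝ)
    (u : ∀ i, Xa i) : ℝ :=
  ∑ y : ∀ i, Xa i, if ∀ i ∈ A, y i = u i then ω y else 0

section Aux

variable [∀ i, Fintype (Xa i)]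

lemma ite_mul_ite {p q : Prop} [Decidable p] [Decidable q] (a b : ℝ) :
    (if p then a else 0) * (if q then b else 0) = if p ∧ q then a * b else 0 := by
  by_cases hp : p <;> by_cases hq : q <;> simp [hp, hq]

lemma margR_sum (A : Finset (Fin n)) (f : Finset (Fin n) → (∀ i, Xa i) → ℝ)
    (u : ∀ i, Xa i) :
    margR A (fun y => ∑ G : Finset (Fin n), f G y) u
      = ∑ G : Finset (Fin n), margR A (f G) u := by
  classical
  unfold margR
  rw [Finset.sum_comm]
  refine Finset.sum_congr rfl fun y _ => ?_
  by_cases hC : ∀ i ∈ A, y i = u i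
  · rw [if_pos hC]
    exact Finset.sum_congr rfl fun G _ => (if_pos hC).symm
  · rw [if_neg hC]
    exact (Finset.sum_congr rfl fun G _ => if_neg hC).trans Finset.sum_const_zero |>.symm

lemma margR_smul (A : Finset (Fin n)) (c : ℝ) (f : (∀ i, Xa i) → ℝ)
    (u : ∀ i, Xa i) :
    margR A (fun y => c * f y) u = c * margR A f u := by
  classical
  unfold margR
  rw [Finset.mul_sum]
  refine Finset.sum_congr rfl fun y _ => ?_
  by_cases hC : ∀ i ∈ A, y i = u i <;> simp [hC]

lemma margR_sub (A : Finset (Fin n)) (f g : (∀ i, Xa i) → ℝ) (u : ∀ i, Xa i) :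
    margR A (fun y => f y - g y) u = margR A f u - margR A g u := by
  classical
  unfold margR
  rw [← Finset.sum_sub_distrib]
  refine Finset.sum_congr rfl fun y _ => ?_
  by_cases hC : ∀ i ∈ A, y i = u i
  · rw [if_pos hC, if_pos hC, if_pos hC]
  · rw [if_neg hC, if_neg hC, if_neg hC]; ring

lemma margR_div (A : Finset (Fin n)) (f : (∀ i, Xa i) → ℝ) (c : ℝ)
    (u : ∀ i, Xa i) :
    margR A (fun y => f y / c) u = margR A f u / c := by
  classical
  unfold margR
  rw [Finset.sum_div]
  refine Finset.sum_congr rfl fun y _ => ?_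
  by_cases hC : ∀ i ∈ A, y i = u i
  · rw [if_pos hC, if_pos hC]
  · rw [if_neg hC, if_neg hC]; ring

/-- Marginalization of the recombinator: the `A`-marginal of
`(π_G.ω) ⊗ (π_{Ḡ}.ω)` is `(π_{A∩G}.ω) ⊗ (π_{A∖G}.ω)`. -/
lemma key_factor (A G : Finset (Fin n)) (φ : (∀ i, Xa i) → ℝ) (u : ∀ i, Xa i) :
    margR A (fun y => margR G φ y * margR Gᶜ φ y) u
      = margR (A ∩ G) φ u * margR (A \ G) φ u := by
  classical
  have hy : ∀ y : ∀ i, Xa i,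
      (if ∀ i ∈ A, y i = u i then margR G φ y * margR Gᶜ φ y else 0)
      = ∑ z : ∀ i, Xa i, ∑ w : ∀ i, Xa i,
          if (∀ i ∈ A, y i = u i) ∧ (∀ i ∈ G, z i = y i) ∧ (∀ i ∈ Gᶜ, w i = y i)
          then φ z * φ w else 0 := by
    intro y
    by_cases hC : ∀ i ∈ A, y i = u i
    · rw [if_pos hC]
      unfold margR
      rw [Finset.sum_mul_sum]
      refine Finset.sum_congr rfl fun z _ => Finset.sum_congr rfl fun w _ => ?_
      rw [ite_mul_ite]
      exact (if_congr (and_iff_right hC) rfl rfl).symm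
    · rw [if_neg hC]
      refine ((Finset.sum_congr rfl fun z _ => (Finset.sum_congr rfl fun w _ =>
        if_neg fun h => hC h.1).trans Finset.sum_const_zero).trans
          Finset.sum_const_zero).symm
  have hy0 : ∀ z w : ∀ i, Xa i,
      (∑ y : ∀ i, Xa i,
        if (∀ i ∈ A, y i = u i) ∧ (∀ i ∈ G, z i = y i) ∧ (∀ i ∈ Gᶜ, w i = y i)
        then φ z * φ w else 0)
      = if (∀ i ∈ A ∩ G, z i = u i) ∧ (∀ i ∈ A \ G, w i = u i)
        then φ z * φ w else 0 := by
    intro z w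
    set y0 : ∀ i, Xa i := fun i => if i ∈ G then z i else w i with hy0def
    have hiff : ∀ y : ∀ i, Xa i,
        ((∀ i ∈ A, y i = u i) ∧ (∀ i ∈ G, z i = y i) ∧ (∀ i ∈ Gᶜ, w i = y i))
        ↔ (y = y0 ∧ ((∀ i ∈ A ∩ G, z i = u i) ∧ (∀ i ∈ A \ G, w i = u i))) := by
      intro y
      constructor
      · rintro ⟨h1, h2, h3⟩
        have hyy : y = y0 := by
          funext i
          by_cases hG : i ∈ G
          · simp [hy0def, hG, (h2 i hG).symm]
          · simp [hy0def, hG, (h3 i (Finset.mem_compl.mpr hG)).symm]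
        refine ⟨hyy, fun i hi => ?_, fun i hi => ?_⟩
        · rw [Finset.mem_inter] at hi
          rw [h2 i hi.2, h1 i hi.1]
        · rw [Finset.mem_sdiff] at hi
          rw [h3 i (Finset.mem_compl.mpr hi.2), h1 i hi.1]
      · rintro ⟨rfl, hz, hw⟩
        refine ⟨fun i hi => ?_, fun i hi => ?_, fun i hi => ?_⟩
        · by_cases hG : i ∈ G
          · simpa [hy0def, hG] using hz i (Finset.mem_inter.mpr ⟨hi, hG⟩)
          · simpa [hy0def, hG] using hw i (Finset.mem_sdiff.mpr ⟨hi, hG⟩)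
        · simp [hy0def, hi]
        · have hG : i ∉ G := Finset.mem_compl.mp hi
          simp [hy0def, hG]
    calc (∑ y : ∀ i, Xa i,
        if (∀ i ∈ A, y i = u i) ∧ (∀ i ∈ G, z i = y i) ∧ (∀ i ∈ Gᶜ, w i = y i)
        then φ z * φ w else 0)
        = ∑ y : ∀ i, Xa i,
            if y = y0 then
              (if (∀ i ∈ A ∩ G, z i = u i) ∧ (∀ i ∈ A \ G, w i = u i)
               then φ z * φ w else 0) else 0 := by
          refine Finset.sum_congr rfl fun y _ => ?_
          rw [if_congr (hiff y) rfl rfl, ite_and]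
      _ = _ := by rw [Finset.sum_ite_eq' Finset.univ y0]; simp
  show (∑ y : ∀ i, Xa i,
      if ∀ i ∈ A, y i = u i then margR G φ y * margR Gᶜ φ y else 0) = _
  rw [Finset.sum_congr rfl fun y _ => hy y]
  rw [Finset.sum_comm]
  rw [Finset.sum_congr rfl fun z _ => Finset.sum_comm]
  rw [Finset.sum_congr rfl fun z _ => Finset.sum_congr rfl fun w _ => hy0 z w]
  show _ = (∑ z : ∀ i, Xa i, if ∀ i ∈ A ∩ G, z i = u i then φ z else 0) *
      (∑ w : ∀ i, Xa i, if ∀ i ∈ A \ G, w i = u i then φ w else 0)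
  rw [Finset.sum_mul_sum]
  exact Finset.sum_congr rfl fun z _ => Finset.sum_congr rfl fun w _ =>
    (ite_mul_ite _ _).symm

/-- Evaluation of the `A`-marginal of the right-hand side of the recombination ODE. -/
lemma margR_deriv_eval (A : Finset (Fin n)) (ρ : Finset (Fin n) → ℝ)
    (φ : (∀ i, Xa i) → ℝ) (c0 : ℝ) (hc0 : c0 ≠ 0)
    (hm : ∑ w : ∀ i, Xa i, φ w = c0) (u : ∀ i, Xa i) :
    margR A (fun y => ∑ G : Finset (Fin n), ρ G / 2 *
        (margR G φ y * margR Gᶜ φ y / (∑ w : ∀ i, Xa i, φ w) - φ y)) u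
      = ∑ B ∈ A.powerset,
          (∑ H ∈ Finset.univ.filter (fun H : Finset (Fin n) => H ∩ A = B), ρ H) / 2 *
            ((1 / c0) * margR B φ u * margR (A \ B) φ u - margR A φ u) := by
  classical
  rw [hm]
  have step1 : margR A (fun y => ∑ G : Finset (Fin n), ρ G / 2 *
        (margR G φ y * margR Gᶜ φ y / c0 - φ y)) u
      = ∑ G : Finset (Fin n), ρ G / 2 *
          ((1 / c0) * margR (G ∩ A) φ u * margR (A \ (G ∩ A)) φ u - margR A φ u) := by
    rw [margR_sum]
    refine Finset.sum_congr rfl fun G _ => ?_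
    rw [margR_smul, margR_sub, margR_div, key_factor]
    rw [Finset.inter_comm G A]
    rw [Finset.sdiff_inter_self_left A G]
    ring
  rw [step1]
  have step2 : ∀ B ∈ A.powerset,
      (∑ H ∈ Finset.univ.filter (fun H : Finset (Fin n) => H ∩ A = B), ρ H) / 2 *
          ((1 / c0) * margR B φ u * margR (A \ B) φ u - margR A φ u)
        = ∑ H ∈ Finset.univ.filter (fun H : Finset (Fin n) => H ∩ A = B),
            ρ H / 2 * ((1 / c0) * margR (H ∩ A) φ u * margR (A \ (H ∩ A)) φ u
              - margR A φ u) := by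
    intro B _
    rw [Finset.sum_div, Finset.sum_mul]
    refine Finset.sum_congr rfl fun H hH => ?_
    rw [(Finset.mem_filter.mp hH).2]
  rw [Finset.sum_congr rfl step2]
  exact (Finset.sum_fiberwise_of_maps_to
    (fun H _ => Finset.mem_powerset.mpr (Finset.inter_subset_right)) _).symm

/-- The marginal evaluation is linear in `ω`, so it differentiates coordinatewise. -/
lemma hasDerivAt_margR (A : Finset (Fin n)) (ω : ℝ → ((∀ i, Xa i) → ℝ))
    (D : (∀ i, Xa i) → ℝ) (t : ℝ) (hω : HasDerivAt ω D t) (u : ∀ i, Xa i) :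
    HasDerivAt (fun s => margR A (ω s) u) (margR A D u) t := by
  classical
  have h := hasDerivAt_pi.mp hω
  unfold margR
  apply HasDerivAt.fun_sum
  intro y _
  by_cases hy : ∀ i ∈ A, y i = u i
  · simpa [eq_true hy] using h y
  · simpa [eq_false hy] using hasDerivAt_const t (0 : ℝ)

end Aux

/-- Dynamics of products of marginals for the deterministic recombination equation
`ω̇ = ∑_G (ρ_G/2)(R_G − 1)ω` (with constant total mass `c₀ ≠ 0`): for a partition
`{A_1,…,A_m}` of the sites, the tensor product `(π_{A_1}.ω_t) ⊗ ⋯ ⊗ (π_{A_m}.ω_t)`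
(evaluated here at the projections of arbitrary full types `u ℓ`) has derivative
`∑_j ∑_{B ⊆ A_j} (ϱ^{(j)}_B/2) ⋯ [(1/c₀)(π_B.ω)⊗(π_{A_j∖B}.ω) − π_{A_j}.ω] ⋯`,
where `ϱ^{(j)}_B = ∑_{H ∩ A_j = B} ρ_H`. -/
theorem deterministic_product_dynamics {m : ℕ} (hn : 1 ≤ n) (hm : 1 ≤ m)
    [∀ i, Fintype (Xa i)] [∀ i, Nonempty (Xa i)]
    (ρ : Finset (Fin n) → ℝ) (hρ0 : ∀ G, 0 ≤ ρ G) (hρc : ∀ G, ρ G = ρ Gᶜ)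
    (hρe : ρ ∅ = 0) (hρu : ρ Finset.univ = 0)
    (A : Fin m → Finset (Fin n))
    (hA1 : ∀ ℓ, (A ℓ).Nonempty)
    (hA2 : ∀ k l, k ≠ l → Disjoint (A k) (A l))
    (hA3 : Finset.univ.biUnion A = Finset.univ)
    (ω : ℝ → ((∀ i, Xa i) → ℝ)) (c0 : ℝ) (hc0 : c0 ≠ 0)
    (hmass : ∀ t, ∑ y : ∀ i, Xa i, ω t y = c0)
    (hode : ∀ t, HasDerivAt ω
      (fun y => ∑ G : Finset (Fin n), ρ G / 2 *
        (margR G (ω t) y * margR Gᶜ (ω t) y / (∑ w : ∀ i, Xa i, ω t w) - ω t y)) t)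
    (t : ℝ) (u : ∀ ℓ : Fin m, ∀ i, Xa i) :
    HasDerivAt (fun s => ∏ ℓ : Fin m, margR (A ℓ) (ω s) (u ℓ))
      (∑ j : Fin m, ∑ B ∈ (A j).powerset,
        (∑ H ∈ Finset.univ.filter (fun H : Finset (Fin n) => H ∩ A j = B), ρ H) / 2 *
          ((∏ ℓ ∈ Finset.univ.erase j, margR (A ℓ) (ω t) (u ℓ)) *
            ((1 / c0) * margR B (ω t) (u j) * margR (A j \ B) (ω t) (u j)
              - margR (A j) (ω t) (u j)))) t := by
  classical
  set D : (∀ i, Xa i) → ℝ := fun y => ∑ G : Finset (Fin n), ρ G / 2 *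
      (margR G (ω t) y * margR Gᶜ (ω t) y / (∑ w : ∀ i, Xa i, ω t w) - ω t y) with hD
  have hprod := HasDerivAt.fun_finsetProd (u := (Finset.univ : Finset (Fin m)))
    (f := fun ℓ s => margR (A ℓ) (ω s) (u ℓ))
    (f' := fun ℓ => margR (A ℓ) D (u ℓ)) (x := t)
    (fun ℓ _ => hasDerivAt_margR (A ℓ) ω D t (hode t) (u ℓ))
  have hval : (∑ j : Fin m, ∑ B ∈ (A j).powerset,
        (∑ H ∈ Finset.univ.filter (fun H : Finset (Fin n) => H ∩ A j = B), ρ H) / 2 *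
          ((∏ ℓ ∈ Finset.univ.erase j, margR (A ℓ) (ω t) (u ℓ)) *
            ((1 / c0) * margR B (ω t) (u j) * margR (A j \ B) (ω t) (u j)
              - margR (A j) (ω t) (u j))))
      = ∑ ℓ : Fin m, (∏ j ∈ Finset.univ.erase ℓ, margR (A j) (ω t) (u j)) •
          margR (A ℓ) D (u ℓ) := by
    refine Finset.sum_congr rfl fun j _ => ?_
    rw [smul_eq_mul, hD,
      margR_deriv_eval (A j) ρ (ω t) c0 hc0 (hmass t) (u j), Finset.mul_sum]
    exact Finset.sum_congr rfl fun B _ => by ring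
  rw [hval]
  exact hprod
end MoranRecomb
end
end

section
/- Let n = 2 (two sites), let ρ₁ := ρ_{{1}} (= ρ_{{2}}) be the recombination rate and b ≥ 0 the resampling rate, and fix a reference type x° ∈ X. Let f(z) := [1,2]_z = z(x°). Then for every z : X → ℕ with ∑_y z(y) = N, the combined recombination–resampling generator satisfies ((𝒢 + B)f)(z) = (ρ₁/N)([1]_z · [2]_z − N · [1,2]_z); in particular resampling does not contribute, and d/dt E[[1,2]_t] = (ρ₁/N) E[[1]_t [2]_t − N [1,2]_t]. -/
open scoped Classical

noncomputable section

namespace MoranRecomb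

variable {Xa : Fin 2 → Type*}

/-- The resampling generator `B`. -/
def resGen [∀ i, Fintype (Xa i)] (b N : ℝ) (f : ((∀ i, Xa i) → ℤ) → ℝ)
    (z : (∀ i, Xa i) → ℤ) : ℝ :=
  ∑ x : ∀ i, Xa i, ∑ y : ∀ i, Xa i,
    b / (2 * N) * (z x : ℝ) * (z y : ℝ) * (f (z + delta x - delta y) - f z)

/- ### auxiliary lemmas -/

lemma sum_finset_fin_two (g : Finset (Fin 2) → ℝ) :
    ∑ G : Finset (Fin 2), g G = g ∅ + g {0} + g {1} + g Finset.univ := by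
  rw [show (Finset.univ : Finset (Finset (Fin 2))) = {∅, {0}, {1}, Finset.univ} from by decide]
  rw [Finset.sum_insert (by decide), Finset.sum_insert (by decide),
    Finset.sum_insert (by decide), Finset.sum_singleton]
  ring

lemma factor_sum {α : Type*} [Fintype α] (f : α → ℝ) (p q : α → Prop) :
    ∑ x : α, ∑ y : α, f x * f y * (if p x ∧ q y then (1:ℝ) else 0)
      = (∑ x : α, if p x then f x else 0) * (∑ y : α, if q y then f y else 0) := by
  rw [Finset.sum_mul_sum]
  refine Finset.sum_congr rfl fun x _ => Finset.sum_congr rfl fun y _ => ?_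
  by_cases hp : p x <;> by_cases hq : q y <;> simp [hp, hq]

lemma factor_sum' {α : Type*} [Fintype α] (f : α → ℝ) (p q : α → Prop) :
    ∑ x : α, ∑ y : α, f x * f y * (if p y ∧ q x then (1:ℝ) else 0)
      = (∑ x : α, if p x then f x else 0) * (∑ y : α, if q y then f y else 0) := by
  rw [Finset.sum_comm, ← factor_sum f p q]
  exact Finset.sum_congr rfl fun x _ => Finset.sum_congr rfl fun y _ => by ring


lemma diag_sum_left {α : Type*} [Fintype α] (f : α → ℝ) (x0 : α) :
    ∑ x : α, ∑ y : α, f x * f y * (if x0 = x then (1:ℝ) else 0)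
      = f x0 * ∑ y : α, f y := by
  have h : ∀ x : α, ∑ y : α, f x * f y * (if x0 = x then (1:ℝ) else 0)
      = (if x0 = x then f x else 0) * ∑ y : α, f y := by
    intro x
    rw [Finset.mul_sum]
    refine Finset.sum_congr rfl fun y _ => ?_
    by_cases h : x0 = x <;> simp [h]
  simp_rw [h]
  rw [← Finset.sum_mul]
  congr 1
  simp [Finset.sum_ite_eq]

lemma diag_sum_right {α : Type*} [Fintype α] (f : α → ℝ) (x0 : α) :
    ∑ x : α, ∑ y : α, f x * f y * (if x0 = y then (1:ℝ) else 0)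
      = f x0 * ∑ y : α, f y := by
  rw [Finset.sum_comm, ← diag_sum_left f x0]
  exact Finset.sum_congr rfl fun x _ => Finset.sum_congr rfl fun y _ => by ring

lemma recMap0 (x y x0 : ∀ i, Xa i) :
    (x0 = recMap {0} x y) ↔ (x0 0 = x 0 ∧ x0 1 = y 1) := by
  simp [recMap, funext_iff, Fin.forall_fin_two]

lemma recMap1 (x y x0 : ∀ i, Xa i) :
    (x0 = recMap {1} x y) ↔ (x0 0 = y 0 ∧ x0 1 = x 1) := by
  simp [recMap, funext_iff, Fin.forall_fin_two]

lemma compl0 : (({0} : Finset (Fin 2))ᶜ : Finset (Fin 2)) = {1} := by decide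
lemma compl1 : (({1} : Finset (Fin 2))ᶜ : Finset (Fin 2)) = {0} := by decide

lemma recMap_univ (x y : ∀ i, Xa i) : recMap Finset.univ x y = x := by
  funext i; simp [recMap]
lemma recMap_empty (x y : ∀ i, Xa i) : recMap ∅ x y = y := by
  funext i; simp [recMap]

/-- Two sites with recombination and resampling, `f(z) = [1,2]_z = z(x°)`:
`((𝒢 + B)f)(z) = (ρ₁/N)([1]_z [2]_z − N [1,2]_z)`; resampling does not contribute, and
`d/dt 𝔼[[1,2]_t] = (ρ₁/N) 𝔼[[1]_t [2]_t − N [1,2]_t]`. -/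
theorem two_sites_pair_count
    [∀ i, Fintype (Xa i)] [∀ i, Nonempty (Xa i)]
    (ρ : Finset (Fin 2) → ℝ) (ρ1 : ℝ) (hρ0 : 0 ≤ ρ1)
    (h1 : ρ {0} = ρ1) (h2 : ρ {1} = ρ1) (hρe : ρ ∅ = 0) (hρu : ρ Finset.univ = 0)
    (b : ℝ) (hb : 0 ≤ b) (N : ℝ) (hN : 0 < N) (x0 : ∀ i, Xa i)
    (z : (∀ i, Xa i) → ℕ) (hz : ∑ y : ∀ i, Xa i, (z y : ℝ) = N) :
    recGen ρ N (fun w => (w x0 : ℝ)) (fun y => (z y : ℤ))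
        + resGen b N (fun w => (w x0 : ℝ)) (fun y => (z y : ℤ))
      = ρ1 / N *
          (margRZ {0} (fun y => (z y : ℤ)) x0 * margRZ {1} (fun y => (z y : ℤ)) x0
            - N * (z x0 : ℝ)) := by
  classical
  set zz : (∀ i, Xa i) → ℤ := fun y => (z y : ℤ) with hzz
  set zr : (∀ i, Xa i) → ℝ := fun y => (z y : ℝ) with hzr
  -- marginals in convenient form
  have hm1 : margRZ {0} zz x0 = ∑ x : ∀ i, Xa i, if x0 0 = x 0 then zr x else 0 := by
    refine Finset.sum_congr rfl fun y _ => ?_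
    have : (∀ i ∈ ({0} : Finset (Fin 2)), y i = x0 i) ↔ (x0 0 = y 0) := by
      simp [eq_comm]
    rw [if_congr this rfl rfl]
    split <;> simp [zz, zr]
  have hm2 : margRZ {1} zz x0 = ∑ x : ∀ i, Xa i, if x0 1 = x 1 then zr x else 0 := by
    refine Finset.sum_congr rfl fun y _ => ?_
    have : (∀ i ∈ ({1} : Finset (Fin 2)), y i = x0 i) ↔ (x0 1 = y 1) := by
      simp [eq_comm]
    rw [if_congr this rfl rfl]
    split <;> simp [zz, zr]
  -- resampling part vanishes
  have hres : resGen b N (fun w => (w x0 : ℝ)) zz = 0 := by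
    have key : ∀ x y : ∀ i, Xa i,
        b / (2 * N) * (zz x : ℝ) * (zz y : ℝ) *
          (((zz + delta x - delta y) x0 : ℝ) - (zz x0 : ℝ))
        = b / (2 * N) * (zr x * zr y * ((delta x x0 : ℝ)))
          - b / (2 * N) * (zr x * zr y * ((delta y x0 : ℝ))) := by
      intro x y
      simp only [Pi.add_apply, Pi.sub_apply, Int.cast_add, Int.cast_sub, zr, zz]
      push_cast
      ring
    simp only [resGen]
    calc ∑ x : ∀ i, Xa i, ∑ y : ∀ i, Xa i,
          b / (2 * N) * (zz x : ℝ) * (zz y : ℝ) *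
            ((fun w => ((w x0 : ℤ) : ℝ)) (zz + delta x - delta y) -
              (fun w => ((w x0 : ℤ) : ℝ)) zz)
        = ∑ x : ∀ i, Xa i, ∑ y : ∀ i, Xa i,
            (b / (2 * N) * (zr x * zr y * ((delta x x0 : ℝ)))
              - b / (2 * N) * (zr x * zr y * ((delta y x0 : ℝ)))) := by
          exact Finset.sum_congr rfl fun x _ => Finset.sum_congr rfl fun y _ => key x y
      _ = 0 := by
          rw [Finset.sum_congr rfl fun x _ => Finset.sum_sub_distrib _ _, Finset.sum_sub_distrib]
          rw [sub_eq_zero]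
          rw [Finset.sum_comm]
          exact Finset.sum_congr rfl fun x _ => Finset.sum_congr rfl fun y _ => by ring
  -- the two nontrivial recombination sums
  have hd : ∀ (x : ∀ i, Xa i), (delta x x0 : ℝ) = if x0 = x then (1:ℝ) else 0 := by
    intro x; simp [delta]
  have hS0 : ∑ x : ∀ i, Xa i, ∑ y : ∀ i, Xa i,
      zr x * zr y * ((jump ({0} : Finset (Fin 2)) x y x0 : ℤ) : ℝ)
      = 2 * (margRZ {0} zz x0 * margRZ {1} zz x0 - N * zr x0) := by
    have expand : ∀ x y : ∀ i, Xa i,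
        zr x * zr y * ((jump ({0} : Finset (Fin 2)) x y x0 : ℤ) : ℝ)
        = zr x * zr y * (if x0 0 = x 0 ∧ x0 1 = y 1 then (1:ℝ) else 0)
          + zr x * zr y * (if x0 0 = y 0 ∧ x0 1 = x 1 then (1:ℝ) else 0)
          - zr x * zr y * (if x0 = x then (1:ℝ) else 0)
          - zr x * zr y * (if x0 = y then (1:ℝ) else 0) := by
      intro x y
      simp only [jump, compl0, Int.cast_add, Int.cast_sub]
      rw [hd, hd, hd, hd]
      rw [if_congr (recMap0 x y x0) rfl rfl, if_congr (recMap1 x y x0) rfl rfl]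
      ring
    simp_rw [expand]
    rw [Finset.sum_congr rfl fun x _ => Finset.sum_sub_distrib _ _, Finset.sum_sub_distrib]
    rw [Finset.sum_congr rfl fun x _ => Finset.sum_sub_distrib _ _, Finset.sum_sub_distrib]
    rw [Finset.sum_congr rfl fun x _ => Finset.sum_add_distrib, Finset.sum_add_distrib]
    rw [factor_sum zr (fun x => x0 0 = x 0) (fun y => x0 1 = y 1)]
    rw [factor_sum' zr (fun y => x0 0 = y 0) (fun x => x0 1 = x 1)]
    have dL : (∑ x : ∀ i, Xa i, ∑ y : ∀ i, Xa i, zr x * zr y * (if x0 = x then (1:ℝ) else 0)) = zr x0 * N := by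
      rw [← hz]; convert diag_sum_left zr x0 using 5
    have dR : (∑ x : ∀ i, Xa i, ∑ y : ∀ i, Xa i, zr x * zr y * (if x0 = y then (1:ℝ) else 0)) = zr x0 * N := by
      rw [← hz]; convert diag_sum_right zr x0 using 5
    rw [dL, dR, hm1, hm2]
    ring
  have hS1 : ∑ x : ∀ i, Xa i, ∑ y : ∀ i, Xa i,
      zr x * zr y * ((jump ({1} : Finset (Fin 2)) x y x0 : ℤ) : ℝ)
      = 2 * (margRZ {0} zz x0 * margRZ {1} zz x0 - N * zr x0) := by
    have expand : ∀ x y : ∀ i, Xa i,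
        zr x * zr y * ((jump ({1} : Finset (Fin 2)) x y x0 : ℤ) : ℝ)
        = zr x * zr y * (if x0 0 = x 0 ∧ x0 1 = y 1 then (1:ℝ) else 0)
          + zr x * zr y * (if x0 0 = y 0 ∧ x0 1 = x 1 then (1:ℝ) else 0)
          - zr x * zr y * (if x0 = x then (1:ℝ) else 0)
          - zr x * zr y * (if x0 = y then (1:ℝ) else 0) := by
      intro x y
      simp only [jump, compl1, Int.cast_add, Int.cast_sub]
      rw [hd, hd, hd, hd]
      rw [if_congr (recMap0 x y x0) rfl rfl, if_congr (recMap1 x y x0) rfl rfl]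
      ring
    simp_rw [expand]
    rw [Finset.sum_congr rfl fun x _ => Finset.sum_sub_distrib _ _, Finset.sum_sub_distrib]
    rw [Finset.sum_congr rfl fun x _ => Finset.sum_sub_distrib _ _, Finset.sum_sub_distrib]
    rw [Finset.sum_congr rfl fun x _ => Finset.sum_add_distrib, Finset.sum_add_distrib]
    rw [factor_sum zr (fun x => x0 0 = x 0) (fun y => x0 1 = y 1)]
    rw [factor_sum' zr (fun y => x0 0 = y 0) (fun x => x0 1 = x 1)]
    have dL : (∑ x : ∀ i, Xa i, ∑ y : ∀ i, Xa i, zr x * zr y * (if x0 = x then (1:ℝ) else 0)) = zr x0 * N := by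
      rw [← hz]; convert diag_sum_left zr x0 using 5
    have dR : (∑ x : ∀ i, Xa i, ∑ y : ∀ i, Xa i, zr x * zr y * (if x0 = y then (1:ℝ) else 0)) = zr x0 * N := by
      rw [← hz]; convert diag_sum_right zr x0 using 5
    rw [dL, dR, hm1, hm2]
    ring
  -- assemble
  have hrec : recGen ρ N (fun w => (w x0 : ℝ)) zz
      = ρ1 / N * (margRZ {0} zz x0 * margRZ {1} zz x0 - N * zr x0) := by
    have hterm : ∀ (G : Finset (Fin 2)) (x y : ∀ i, Xa i),
        ρ G / (4 * N) * (zz x : ℝ) * (zz y : ℝ) *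
          (((zz + jump G x y) x0 : ℝ) - (zz x0 : ℝ))
        = ρ G / (4 * N) * (zr x * zr y * ((jump G x y x0 : ℤ) : ℝ)) := by
      intro G x y
      simp only [Pi.add_apply, Int.cast_add, zz, zr]
      push_cast
      ring
    simp only [recGen]
    calc ∑ G : Finset (Fin 2), ∑ x : ∀ i, Xa i, ∑ y : ∀ i, Xa i,
          ρ G / (4 * N) * (zz x : ℝ) * (zz y : ℝ) *
            ((fun w => ((w x0 : ℤ) : ℝ)) (zz + jump G x y) - (fun w => ((w x0 : ℤ) : ℝ)) zz)
        = ∑ G : Finset (Fin 2),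
            ρ G / (4 * N) * ∑ x : ∀ i, Xa i, ∑ y : ∀ i, Xa i,
              zr x * zr y * ((jump G x y x0 : ℤ) : ℝ) := by
          refine Finset.sum_congr rfl fun G _ => ?_
          rw [Finset.mul_sum]
          refine Finset.sum_congr rfl fun x _ => ?_
          rw [Finset.mul_sum]
          exact Finset.sum_congr rfl fun y _ => hterm G x y
      _ = ρ1 / N * (margRZ {0} zz x0 * margRZ {1} zz x0 - N * zr x0) := by
          rw [sum_finset_fin_two (fun G => ρ G / (4 * N) * ∑ x : ∀ i, Xa i, ∑ y : ∀ i, Xa i,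
            zr x * zr y * ((jump G x y x0 : ℤ) : ℝ))]
          simp only [hρe, hρu, h1, h2, zero_div, zero_mul, add_zero, zero_add]
          rw [hS0, hS1]
          field_simp
          ring
  rw [hrec, hres, add_zero]


end MoranRecomb
end
end

section
/- Let n = 2 (two sites), let ρ₁ := ρ_{{1}} (= ρ_{{2}}) be the recombination rate and b ≥ 0 the resampling rate, and fix a reference type x° ∈ X. Let g(z) := [1]_z · [2]_z. Then for every z : X → ℕ with ∑_y z(y) = N, the combined recombination–resampling generator satisfies ((𝒢 + B)g)(z) = (b/N)(N · [1,2]_z − [1]_z · [2]_z); in particular recombination does not contribute, and d/dt E[[1]_t [2]_t] = (b/N) E[N [1,2]_t − [1]_t [2]_t]. -/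
open scoped Classical

noncomputable section

namespace MoranRecomb

variable {Xa : Fin 2 → Type*}

/-- auxiliary: real indicator of agreement at site `i`. -/
def indR (i : Fin 2) (u t : ∀ i, Xa i) : ℝ := if t i = u i then 1 else 0

lemma margRZ_add [∀ i, Fintype (Xa i)] (A : Finset (Fin 2)) (v w : (∀ i, Xa i) → ℤ)
    (u : ∀ i, Xa i) : margRZ A (v + w) u = margRZ A v u + margRZ A w u := by
  unfold margRZ
  rw [← Finset.sum_add_distrib]
  refine Finset.sum_congr rfl fun t _ => ?_
  by_cases h : ∀ i ∈ A, t i = u i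
  · rw [if_pos h, if_pos h, if_pos h]; simp only [Pi.add_apply, Pi.sub_apply]; push_cast; ring
  · simp [h]

lemma margRZ_sub [∀ i, Fintype (Xa i)] (A : Finset (Fin 2)) (v w : (∀ i, Xa i) → ℤ)
    (u : ∀ i, Xa i) : margRZ A (v - w) u = margRZ A v u - margRZ A w u := by
  unfold margRZ
  rw [← Finset.sum_sub_distrib]
  refine Finset.sum_congr rfl fun t _ => ?_
  by_cases h : ∀ i ∈ A, t i = u i
  · rw [if_pos h, if_pos h, if_pos h]; simp only [Pi.add_apply, Pi.sub_apply]; push_cast; ring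
  · simp [h]

lemma margRZ_delta [∀ i, Fintype (Xa i)] (A : Finset (Fin 2)) (x u : ∀ i, Xa i) :
    margRZ A (delta x) u = if ∀ i ∈ A, x i = u i then 1 else 0 := by
  unfold margRZ delta
  rw [Finset.sum_eq_single x]
  · simp
  · intro y _ hy; simp [hy]
  · simp

lemma margRZ_delta_single [∀ i, Fintype (Xa i)] (i : Fin 2) (x u : ∀ i, Xa i) :
    margRZ {i} (delta x) u = indR i u x := by
  rw [margRZ_delta]; simp [indR]

lemma margRZ_jump [∀ i, Fintype (Xa i)] (G : Finset (Fin 2)) (x y : ∀ i, Xa i)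
    (i : Fin 2) (u : ∀ i, Xa i) : margRZ {i} (jump G x y) u = 0 := by
  have h : margRZ {i} (jump G x y) u =
      margRZ {i} (delta (recMap G x y)) u + margRZ {i} (delta (recMap Gᶜ x y)) u
        - margRZ {i} (delta x) u - margRZ {i} (delta y) u := by
    unfold margRZ jump
    rw [← Finset.sum_add_distrib, ← Finset.sum_sub_distrib, ← Finset.sum_sub_distrib]
    refine Finset.sum_congr rfl fun t _ => ?_
    by_cases hc : ∀ j ∈ ({i} : Finset (Fin 2)), t j = u j
    · rw [if_pos hc, if_pos hc, if_pos hc, if_pos hc, if_pos hc]; push_cast; ring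
    · simp only [Finset.mem_singleton, forall_eq] at hc
      simp [hc]
  rw [h, margRZ_delta_single, margRZ_delta_single, margRZ_delta_single, margRZ_delta_single]
  by_cases hG : i ∈ G
  · simp [recMap, indR, hG]
  · simp [recMap, indR, hG]

/-- Two sites with recombination and resampling, `g(z) = [1]_z [2]_z`:
`((𝒢 + B)g)(z) = (b/N)(N [1,2]_z − [1]_z [2]_z)`; recombination does not contribute, and
`d/dt 𝔼[[1]_t [2]_t] = (b/N) 𝔼[N [1,2]_t − [1]_t [2]_t]`. -/
theorem two_sites_marginal_product
    [∀ i, Fintype (Xa i)] [∀ i, Nonempty (Xa i)]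
    (ρ : Finset (Fin 2) → ℝ) (ρ1 : ℝ) (hρ0 : 0 ≤ ρ1)
    (h1 : ρ {0} = ρ1) (h2 : ρ {1} = ρ1) (hρe : ρ ∅ = 0) (hρu : ρ Finset.univ = 0)
    (b : ℝ) (hb : 0 ≤ b) (N : ℝ) (hN : 0 < N) (x0 : ∀ i, Xa i)
    (z : (∀ i, Xa i) → ℕ) (hz : ∑ y : ∀ i, Xa i, (z y : ℝ) = N) :
    recGen ρ N (fun w => margRZ {0} w x0 * margRZ {1} w x0) (fun y => (z y : ℤ))
        + resGen b N (fun w => margRZ {0} w x0 * margRZ {1} w x0) (fun y => (z y : ℤ))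
      = b / N *
          (N * (z x0 : ℝ)
            - margRZ {0} (fun y => (z y : ℤ)) x0 * margRZ {1} (fun y => (z y : ℤ)) x0) := by
  classical
  set zz : (∀ i, Xa i) → ℤ := fun y => (z y : ℤ) with hzzdef
  set M1 : ℝ := margRZ {0} zz x0 with hM1
  set M2 : ℝ := margRZ {1} zz x0 with hM2
  have hwzz : ∀ t : ∀ i, Xa i, ((zz t : ℤ) : ℝ) = (z t : ℝ) := by
    intro t; rw [hzzdef]; push_cast; ring
  -- recombination contributes nothing
  have hrec : recGen ρ N (fun w => margRZ {0} w x0 * margRZ {1} w x0) zz = 0 := by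
    unfold recGen
    refine Finset.sum_eq_zero fun G _ => Finset.sum_eq_zero fun x _ =>
      Finset.sum_eq_zero fun y _ => ?_
    have hdiff : margRZ {0} (zz + jump G x y) x0 * margRZ {1} (zz + jump G x y) x0
        = margRZ {0} zz x0 * margRZ {1} zz x0 := by
      rw [margRZ_add, margRZ_add, margRZ_jump, margRZ_jump, add_zero, add_zero]
    simp only [hdiff, sub_self, mul_zero]
  -- known weighted sums
  have hP : ∑ t : ∀ i, Xa i, (z t : ℝ) = N := hz
  have hQ1 : ∑ t : ∀ i, Xa i, (z t : ℝ) * indR 0 x0 t = M1 := by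
    rw [hM1]; unfold margRZ
    refine Finset.sum_congr rfl fun t _ => ?_
    simp only [Finset.mem_singleton, forall_eq]
    by_cases h : t 0 = x0 0 <;> simp [indR, h, hwzz]
  have hQ2 : ∑ t : ∀ i, Xa i, (z t : ℝ) * indR 1 x0 t = M2 := by
    rw [hM2]; unfold margRZ
    refine Finset.sum_congr rfl fun t _ => ?_
    simp only [Finset.mem_singleton, forall_eq]
    by_cases h : t 1 = x0 1 <;> simp [indR, h, hwzz]
  have hR : ∑ t : ∀ i, Xa i, (z t : ℝ) * (indR 0 x0 t * indR 1 x0 t) = (z x0 : ℝ) := by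
    rw [Finset.sum_eq_single x0]
    · simp [indR]
    · intro t _ ht
      have hne : ¬(t 0 = x0 0 ∧ t 1 = x0 1) := by
        rintro ⟨ha, hb'⟩
        exact ht (funext fun i => by fin_cases i <;> assumption)
      by_cases h0 : t 0 = x0 0 <;> by_cases h1 : t 1 = x0 1 <;>
        simp [indR, h0, h1] <;> tauto
    · simp
  -- the resampling change of g
  have hg : ∀ x y : ∀ i, Xa i,
      margRZ {0} (zz + delta x - delta y) x0 * margRZ {1} (zz + delta x - delta y) x0
        = (M1 + indR 0 x0 x - indR 0 x0 y) * (M2 + indR 1 x0 x - indR 1 x0 y) := by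
    intro x y
    rw [margRZ_sub, margRZ_add, margRZ_sub, margRZ_add,
        margRZ_delta_single, margRZ_delta_single, margRZ_delta_single, margRZ_delta_single,
        hM1, hM2]
  have hres : resGen b N (fun w => margRZ {0} w x0 * margRZ {1} w x0) zz
      = b / (2 * N) * (2 * (N * (z x0 : ℝ) - M1 * M2)) := by
    unfold resGen
    have hx : ∀ x : ∀ i, Xa i,
        (∑ y : ∀ i, Xa i, b / (2 * N) * (zz x : ℝ) * (zz y : ℝ) *
          ((fun w => margRZ {0} w x0 * margRZ {1} w x0) (zz + delta x - delta y)
            - (fun w => margRZ {0} w x0 * margRZ {1} w x0) zz))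
        = b / (2 * N) *
            ((((z x0 : ℝ) - 2 * (M1 * M2)) * ((z x : ℝ))
              + (M2 * (N - 1)) * ((z x : ℝ) * indR 0 x0 x)
              + (M1 * (N - 1)) * ((z x : ℝ) * indR 1 x0 x)
              + N * ((z x : ℝ) * (indR 0 x0 x * indR 1 x0 x)))) := by
      intro x
      have hterm : ∀ y : ∀ i, Xa i,
          b / (2 * N) * (zz x : ℝ) * (zz y : ℝ) *
            ((fun w => margRZ {0} w x0 * margRZ {1} w x0) (zz + delta x - delta y)
              - (fun w => margRZ {0} w x0 * margRZ {1} w x0) zz)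
          = b / (2 * N) *
              ((M1 * ((z x : ℝ) * indR 1 x0 x) + M2 * ((z x : ℝ) * indR 0 x0 x)
                  + (z x : ℝ) * (indR 0 x0 x * indR 1 x0 x)) * (z y : ℝ)
                + (-(M2 * (z x : ℝ)) - (z x : ℝ) * indR 1 x0 x) * ((z y : ℝ) * indR 0 x0 y)
                + (-(M1 * (z x : ℝ)) - (z x : ℝ) * indR 0 x0 x) * ((z y : ℝ) * indR 1 x0 y)
                + (z x : ℝ) * ((z y : ℝ) * (indR 0 x0 y * indR 1 x0 y))) := by
        intro y
        simp only [hg, hwzz]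
        ring
      rw [Finset.sum_congr rfl fun y _ => hterm y]
      rw [← Finset.mul_sum]
      simp only [Finset.sum_add_distrib, ← Finset.mul_sum]
      rw [hP, hQ1, hQ2, hR]
      ring
    rw [Finset.sum_congr rfl fun x _ => hx x]
    rw [← Finset.mul_sum]
    simp only [Finset.sum_add_distrib, ← Finset.mul_sum]
    rw [hP, hQ1, hQ2, hR]
    ring
  rw [hrec, hres, zero_add]
  field_simp


end MoranRecomb
end
end

section
/- Let ω : X → ℝ with total mass |ω| := ∑_{y∈X} ω(y) ≠ 0, and let A, G ⊆ S. Then the A-marginal of the recombinator satisfies π_A.(R_G(ω)) = (1/|ω|) · (π_{G∩A}.ω) ⊗ (π_{A∖G}.ω); explicitly, for every u ∈ X_A, (π_A.(R_G ω))(u) = (π_{G∩A}.ω)(u_{G∩A}) · (π_{A∖G}.ω)(u_{A∖G}) / |ω|. In particular the marginal of the recombined measure is the recombinator of the marginals for the induced crossover set G ∩ A. -/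
set_option maxHeartbeats 1000000


open scoped Classical

noncomputable section

namespace MoranRecomb

variable {n : ℕ} {Xa : Fin n → Type*}

/-- The `A`-marginal of the recombinator `R_G(ω) = (1/|ω|)(π_G.ω) ⊗ (π_{S∖G}.ω)` is the
recombinator of the marginals for the induced crossover set `G ∩ A`:
`π_A.(R_G(ω)) = (1/|ω|)(π_{G∩A}.ω) ⊗ (π_{A∖G}.ω)`, i.e. for every evaluation point `u`,
`(π_A.(R_G ω))(π_A u) = (π_{G∩A}.ω)(π_{G∩A} u) (π_{A∖G}.ω)(π_{A∖G} u) / |ω|`. -/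
theorem marginal_recombinator (hn : 1 ≤ n)
    [∀ i, Fintype (Xa i)] [∀ i, Nonempty (Xa i)]
    (ω : (∀ i, Xa i) → ℝ) (hω : (∑ y : ∀ i, Xa i, ω y) ≠ 0)
    (A G : Finset (Fin n)) (u : ∀ i, Xa i) :
    margR A (fun y => margR G ω y * margR Gᶜ ω y / (∑ w : ∀ i, Xa i, ω w)) u
      = margR (G ∩ A) ω u * margR (A \ G) ω u / (∑ w : ∀ i, Xa i, ω w) := by
  classical
  have key : ∀ z w y : (∀ i, Xa i),
      ((∀ i ∈ A, y i = u i) ∧ (∀ i ∈ G, z i = y i) ∧ (∀ i ∈ Gᶜ, w i = y i))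
      ↔ (y = (fun i => if i ∈ G then z i else w i)
          ∧ ((∀ i ∈ G ∩ A, z i = u i) ∧ (∀ i ∈ A \ G, w i = u i))) := by
    intro z w y
    constructor
    · rintro ⟨h1, h2, h3⟩
      have hy : y = fun i => if i ∈ G then z i else w i := by
        funext i
        by_cases hi : i ∈ G
        · simp [hi, (h2 i hi).symm]
        · simp [hi, (h3 i (Finset.mem_compl.mpr hi)).symm]
      refine ⟨hy, ?_, ?_⟩
      · intro i hi
        rw [Finset.mem_inter] at hi
        rw [h2 i hi.1]; exact h1 i hi.2
      · intro i hi
        rw [Finset.mem_sdiff] at hi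
        rw [h3 i (Finset.mem_compl.mpr hi.2)]; exact h1 i hi.1
    · rintro ⟨rfl, hq1, hq2⟩
      refine ⟨?_, ?_, ?_⟩
      · intro i hi
        by_cases hg : i ∈ G
        · simpa [hg] using hq1 i (Finset.mem_inter.mpr ⟨hg, hi⟩)
        · simpa [hg] using hq2 i (Finset.mem_sdiff.mpr ⟨hi, hg⟩)
      · intro i hi; simp [hi]
      · intro i hi; simp [Finset.mem_compl.mp hi]
  have main : (∑ y : ∀ i, Xa i, if ∀ i ∈ A, y i = u i then
        margR G ω y * margR Gᶜ ω y else 0)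
      = margR (G ∩ A) ω u * margR (A \ G) ω u := by
    unfold margR
    have step1 : (∑ y : ∀ i, Xa i, if ∀ i ∈ A, y i = u i then
          (∑ z : ∀ i, Xa i, if ∀ i ∈ G, z i = y i then ω z else 0) *
          (∑ w : ∀ i, Xa i, if ∀ i ∈ Gᶜ, w i = y i then ω w else 0) else 0)
        = ∑ y : ∀ i, Xa i, ∑ z : ∀ i, Xa i, ∑ w : ∀ i, Xa i,
            if ((∀ i ∈ A, y i = u i) ∧ (∀ i ∈ G, z i = y i) ∧ (∀ i ∈ Gᶜ, w i = y i))
            then ω z * ω w else 0 := by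
      refine Finset.sum_congr rfl fun y _ => ?_
      by_cases hA : ∀ i ∈ A, y i = u i
      · rw [if_pos hA, Finset.sum_mul_sum]
        refine Finset.sum_congr rfl fun z _ => Finset.sum_congr rfl fun w _ => ?_
        split_ifs with h1 h2 h3 h3 h2 <;> simp_all
      · rw [if_neg hA]
        refine (Finset.sum_eq_zero fun z _ => Finset.sum_eq_zero fun w _ => ?_).symm
        rw [if_neg]; tauto
    rw [step1]
    rw [Finset.sum_comm]
    have step2 : ∀ z : ∀ i, Xa i, (∑ y : ∀ i, Xa i, ∑ w : ∀ i, Xa i,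
            if ((∀ i ∈ A, y i = u i) ∧ (∀ i ∈ G, z i = y i) ∧ (∀ i ∈ Gᶜ, w i = y i))
            then ω z * ω w else 0)
        = (if ∀ i ∈ G ∩ A, z i = u i then ω z else 0) *
          (∑ w : ∀ i, Xa i, if ∀ i ∈ A \ G, w i = u i then ω w else 0) := by
      intro z
      rw [Finset.sum_comm, Finset.mul_sum]
      refine Finset.sum_congr rfl fun w _ => ?_
      have e1 : (∑ y : ∀ i, Xa i,
            if ((∀ i ∈ A, y i = u i) ∧ (∀ i ∈ G, z i = y i) ∧ (∀ i ∈ Gᶜ, w i = y i))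
            then ω z * ω w else 0)
          = ∑ y : ∀ i, Xa i,
            if (y = (fun i => if i ∈ G then z i else w i)
                ∧ ((∀ i ∈ G ∩ A, z i = u i) ∧ (∀ i ∈ A \ G, w i = u i)))
            then ω z * ω w else 0 :=
        Finset.sum_congr rfl fun y _ => if_congr (key z w y) rfl rfl
      rw [e1]
      simp only [ite_and]
      rw [Finset.sum_ite_eq' Finset.univ (fun i => if i ∈ G then z i else w i)
        (fun _ => if ∀ i ∈ G ∩ A, z i = u i then
          if ∀ i ∈ A \ G, w i = u i then ω z * ω w else 0 else 0)]
      simp only [Finset.mem_univ, if_true]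
      split_ifs <;> ring
    rw [Finset.sum_congr rfl fun z _ => step2 z, ← Finset.sum_mul]
  have final : (∑ y : ∀ i, Xa i, if ∀ i ∈ A, y i = u i then
        margR G ω y * margR Gᶜ ω y / (∑ w : ∀ i, Xa i, ω w) else 0)
      = (∑ y : ∀ i, Xa i, if ∀ i ∈ A, y i = u i then margR G ω y * margR Gᶜ ω y else 0)
        / (∑ w : ∀ i, Xa i, ω w) := by
    rw [Finset.sum_div]
    refine Finset.sum_congr rfl fun y _ => ?_
    split_ifs <;> simp
  exact final.trans (by rw [main])


end MoranRecomb
end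
end
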